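/- Let q ≥ 2 be an integer and let G be the lamplighter group (⨁_{i∈ℤ} ℤ/qℤ) ⋊ ℤ, where the generator of ℤ acts by shifting the coordinates of the direct sum. Then G has deep pockets with respect to some finite generating set. -/

import Mathlib

/-- The multiplicative group structure on `AddAut K` (composition), as in the older Mathlib. -/
instance addAutGroupOld {A : Type*} [Add A] : Group (AddAut A) where
  mul g h := AddEquiv.trans h g
  one := AddEquiv.refl _
  inv := AddEquiv.symm
  mul_assoc _ _ _ := rfl
  one_mul _ := rfl
  mul_one _ := rfl
  inv_mul_cancel := AddEquiv.self_trans_symm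

/-- `AddAut K` as multiplicative automorphisms of `Multiplicative K`. -/
def addAutToMulAut {K : Type*} [AddCommGroup K] : AddAut K →* MulAut (Multiplicative K) where
  toFun e := AddEquiv.toMultiplicative e
  map_one' := rfl
  map_mul' _ _ := rfl

/-- The shift automorphism of `⨁_{i ∈ ℤ} ℤ/qℤ` (modelled as finitely supported
functions `ℤ →₀ ZMod q`), sending the lamp configuration `f` to `i ↦ f (i - 1)`. -/
def lampShift (q : ℕ) : AddAut (ℤ →₀ ZMod q) :=
  Finsupp.domCongr (Equiv.addRight (1 : ℤ))

/-- The lamplighter group `(⨁_{i ∈ ℤ} ℤ/qℤ) ⋊ ℤ`, the generator of `ℤ` acting by the shift. -/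
abbrev Lamplighter (q : ℕ) : Type :=
  Multiplicative (ℤ →₀ ZMod q) ⋊[addAutToMulAut.comp
    (zpowersHom (AddAut (ℤ →₀ ZMod q)) (lampShift q))] Multiplicative ℤ

/-- Word length with respect to a generating set `S` (inverses allowed). -/
noncomputable def wordLength {G : Type*} [Group G] (S : Set G) (g : G) : ℕ :=
  sInf {n | ∃ f : Fin n → G, (∀ i, f i ∈ S ∪ S⁻¹) ∧ (List.ofFn f).prod = g}

/-- `G` has deep pockets with respect to `S`: there are elements of arbitrarily
large depth, i.e. for each `d` an element `g` all of whose `≤ d`-neighbours stay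
in the ball of radius `|g|_S`. -/
def HasDeepPockets {G : Type*} [Group G] (S : Set G) : Prop :=
  ∀ d : ℕ, ∃ g : G, ∀ h : G, wordLength S g < wordLength S h → d ≤ wordLength S (g⁻¹ * h)

/-!
Take the generators `shiftGen` (move the cursor one step right) and `lampGen v` (add `v` to
the lamp under the cursor), and let `g_n` light every lamp of `[-n, n]` with the cursor at `0`.

A word for an element `(f, k)` must visit every lit lamp and end at `k`; if its footprint
(lit lamps and cursor) spans `[-L, R]`, the walk from `0` needs at least `2 (L + R) - |k|` steps,
so `|supp f| + 2 (L + R) - |k|` grows by at most one per letter and `|g_n| ≥ 6n + 1`.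
Conversely an element with footprint in `[-n, n]` is reached in `6n + 1` letters: walk to the
end of `[-n, n]` on the cursor's far side, sweep across setting lamps, walk back to the cursor.

If `|g_n⁻¹ h| < n`, the footprint of `g_n⁻¹ h`, hence that of `h`, lies in `[-n, n]`, so
`|h| ≤ |g_n|`: the depth of `g_n` is at least `n`.
-/

section WordLength

variable {G : Type*} [Group G] {S : Set G}

theorem wordLength_list_prod_le {l : List G} (hl : ∀ s ∈ l, s ∈ S ∪ S⁻¹) :
    wordLength S l.prod ≤ l.length :=
  Nat.sInf_le ⟨l.get, fun i => hl _ (List.get_mem l i), by rw [List.ofFn_get]⟩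

theorem exists_list_length_eq_wordLength {g : G} (hg : g ∈ Subgroup.closure S) :
    ∃ l : List G, (∀ s ∈ l, s ∈ S ∪ S⁻¹) ∧ l.prod = g ∧ l.length = wordLength S g := by
  rw [← Subgroup.mem_toSubmonoid, Subgroup.closure_toSubmonoid] at hg
  obtain ⟨l, hl, rfl⟩ := Submonoid.exists_list_of_mem_closure hg
  have hne : {n | ∃ f : Fin n → G, (∀ i, f i ∈ S ∪ S⁻¹) ∧ (List.ofFn f).prod = l.prod}.Nonempty :=
    ⟨l.length, l.get, fun i => hl _ (List.get_mem l i), by rw [List.ofFn_get]⟩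
  obtain ⟨f, hf, hprod⟩ := Nat.sInf_mem hne
  refine ⟨List.ofFn f, fun s hs => ?_, hprod, List.length_ofFn⟩
  obtain ⟨i, rfl⟩ := List.mem_ofFn.1 hs
  exact hf i

theorem wordLength_le_one {s : G} (hs : s ∈ S) : wordLength S s ≤ 1 := by
  simpa using wordLength_list_prod_le (S := S) (l := [s]) (by simp [hs])

theorem wordLength_zpow_le {s : G} (hs : s ∈ S) (k : ℤ) : wordLength S (s ^ k) ≤ k.natAbs := by
  have hinv : s⁻¹ ∈ S ∪ S⁻¹ := Or.inr (by simpa using hs)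
  cases k with
  | ofNat n =>
    simpa using wordLength_list_prod_le (S := S) (l := List.replicate n s)
      (by simp [List.mem_replicate, hs])
  | negSucc n =>
    simpa [zpow_negSucc, ← inv_pow] using wordLength_list_prod_le (S := S)
      (l := List.replicate (n + 1) s⁻¹) (by simp only [List.mem_replicate]; grind)

theorem wordLength_mul_le {g h : G} (hg : g ∈ Subgroup.closure S)
    (hh : h ∈ Subgroup.closure S) : wordLength S (g * h) ≤ wordLength S g + wordLength S h := by
  obtain ⟨l₁, hl₁, rfl, hlen₁⟩ := exists_list_length_eq_wordLength hg
  obtain ⟨l₂, hl₂, rfl, hlen₂⟩ := exists_list_length_eq_wordLength hh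
  rw [← hlen₁, ← hlen₂, ← List.length_append, ← List.prod_append]
  exact wordLength_list_prod_le fun s hs => (List.mem_append.1 hs).elim (hl₁ s) (hl₂ s)

theorem wordLength_inv_le {g : G} (hg : g ∈ Subgroup.closure S) :
    wordLength S g⁻¹ ≤ wordLength S g := by
  obtain ⟨l, hl, rfl, hlen⟩ := exists_list_length_eq_wordLength hg
  rw [← hlen, List.prod_inv_reverse, ← List.length_map (f := (·⁻¹)), ← List.length_reverse]
  refine wordLength_list_prod_le fun s hs => ?_
  obtain ⟨r, hr, rfl⟩ := List.mem_map.1 (List.mem_reverse.1 hs)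
  rcases hl r hr with h | h
  exacts [Or.inr (Set.inv_mem_inv.2 h), Or.inl h]

theorem le_wordLength_of_map_mul_le_add_one (ψ : G → ℤ) (h₁ : ψ 1 ≤ 0)
    (hψ : ∀ x, ∀ s ∈ S ∪ S⁻¹, ψ (x * s) ≤ ψ x + 1) {g : G} (hg : g ∈ Subgroup.closure S) :
    ψ g ≤ wordLength S g := by
  have key : ∀ l : List G, (∀ s ∈ l, s ∈ S ∪ S⁻¹) → ∀ x, ψ (x * l.prod) ≤ ψ x + l.length := by
    intro l hl
    induction l with
    | nil => simp
    | cons s l ih =>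
      intro x
      have hs := hψ x s (hl s List.mem_cons_self)
      have hl' := ih (fun r hr => hl r (List.mem_cons_of_mem s hr)) (x * s)
      rw [List.prod_cons, List.length_cons, ← mul_assoc]
      push_cast
      omega
  obtain ⟨l, hl, rfl, hlen⟩ := exists_list_length_eq_wordLength hg
  have := key l hl 1
  rw [one_mul] at this
  omega

end WordLength

theorem Finsupp.support_add_single_subset {α M : Type*} [DecidableEq α] [AddZeroClass M]
    (f : α →₀ M) (a : α) (b : M) : (f + single a b).support ⊆ insert a f.support := by
  intro i hi
  rcases Finset.mem_union.1 (support_add hi) with hi | hi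
  · exact Finset.mem_insert_of_mem hi
  · rw [Finset.mem_singleton.1 (support_single_subset hi)]
    exact Finset.mem_insert_self _ _

namespace Lamplighter

open Finsupp

variable {q : ℕ}

noncomputable def shift (k : ℤ) : AddAut (ℤ →₀ ZMod q) := lampShift q ^ k

theorem shift_apply (k : ℤ) (f : ℤ →₀ ZMod q) (i : ℤ) : shift k f i = f (i - k) := by
  induction k using Int.induction_on generalizing f i with
  | zero => simp [shift]; rfl
  | succ n ih =>
    rw [shift, zpow_add_one]
    exact (ih _ i).trans (congrArg f (by simp; ring))
  | pred n ih =>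
    rw [shift, zpow_sub_one]
    exact (ih _ i).trans (congrArg f (by simp; ring))

@[simp] theorem shift_zero (f : ℤ →₀ ZMod q) : shift 0 f = f := by
  ext i; simp [shift_apply]

theorem shift_shift (k l : ℤ) (f : ℤ →₀ ZMod q) : shift k (shift l f) = shift (k + l) f := by
  ext i; simp [shift_apply, sub_sub]

@[simp] theorem shift_single (k i : ℤ) (v : ZMod q) : shift k (single i v) = single (i + k) v := by
  ext j; simp only [shift_apply, single_apply]; congr 1; grind

def mk (f : ℤ →₀ ZMod q) (k : ℤ) : Lamplighter q := ⟨Multiplicative.ofAdd f, Multiplicative.ofAdd k⟩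

def lamps (x : Lamplighter q) : ℤ →₀ ZMod q := Multiplicative.toAdd x.left

def cursor (x : Lamplighter q) : ℤ := Multiplicative.toAdd x.right

@[simp] theorem lamps_mk (f : ℤ →₀ ZMod q) (k : ℤ) : lamps (mk f k) = f := rfl

@[simp] theorem cursor_mk (f : ℤ →₀ ZMod q) (k : ℤ) : cursor (mk f k) = k := rfl

@[simp] theorem mk_lamps_cursor (x : Lamplighter q) : mk (lamps x) (cursor x) = x := rfl

theorem one_eq_mk : (1 : Lamplighter q) = mk 0 0 := rfl

theorem mk_mul_mk (f g : ℤ →₀ ZMod q) (k l : ℤ) :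
    mk f k * mk g l = mk (f + shift k g) (k + l) := rfl

theorem lamps_mul (x y : Lamplighter q) :
    lamps (x * y) = lamps x + shift (cursor x) (lamps y) := rfl

theorem cursor_mul (x y : Lamplighter q) : cursor (x * y) = cursor x + cursor y := rfl

theorem mk_inv (f : ℤ →₀ ZMod q) (k : ℤ) : (mk f k)⁻¹ = mk (-shift (-k) f) (-k) := by
  rw [inv_eq_iff_mul_eq_one, mk_mul_mk, map_neg, shift_shift]
  simp [one_eq_mk]

def shiftGen : Lamplighter q := mk 0 1

noncomputable def lampGen (v : ZMod q) : Lamplighter q := mk (single 0 v) 0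

theorem mk_zero_eq_shiftGen_zpow (k : ℤ) : mk 0 k = (shiftGen : Lamplighter q) ^ k := by
  have : (shiftGen : Lamplighter q) = SemidirectProduct.inr (Multiplicative.ofAdd 1) := rfl
  rw [this, ← map_zpow, ← ofAdd_zsmul, smul_eq_mul, mul_one]
  rfl

theorem mk_eq_mk_zero_mul (f : ℤ →₀ ZMod q) (k : ℤ) : mk f k = mk f 0 * mk 0 k := by
  simp [mk_mul_mk]

theorem mk_single_eq_conj (i : ℤ) (v : ZMod q) :
    mk (single i v) 0 = shiftGen ^ i * lampGen v * (shiftGen ^ i)⁻¹ := by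
  simp [← mk_zero_eq_shiftGen_zpow, lampGen, mk_inv, mk_mul_mk]

theorem mk_add (f g : ℤ →₀ ZMod q) : mk (f + g) 0 = mk f 0 * mk g 0 := by
  simp [mk_mul_mk]

def footprint (x : Lamplighter q) : Finset ℤ := insert (cursor x) (lamps x).support

theorem le_sup_footprint_cursor (σ : ℤ → ℕ) (x : Lamplighter q) :
    σ (cursor x) ≤ (footprint x).sup σ :=
  Finset.le_sup (Finset.mem_insert_self _ _)

theorem footprint_mk_zero_mul (f : ℤ →₀ ZMod q) (y : Lamplighter q) :
    footprint (mk f 0 * y) ⊆ f.support ∪ footprint y := by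
  intro i hi
  simp only [footprint, lamps_mul, cursor_mul, lamps_mk, cursor_mk, shift_zero, zero_add,
    Finset.mem_insert] at hi ⊢
  rcases hi with rfl | hi
  · simp
  · rcases Finset.mem_union.1 (support_add hi) with hi | hi <;> simp [hi]

theorem mul_mk_single (x : Lamplighter q) (v : ZMod q) (c : ℤ) :
    x * mk (single 0 v) c = mk (lamps x + single (cursor x) v) (cursor x + c) := by
  conv_lhs => rw [← mk_lamps_cursor x]
  rw [mk_mul_mk, shift_single, zero_add]

noncomputable def potential (x : Lamplighter q) : ℤ :=
  (lamps x).support.card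
    + 2 * ((footprint x).sup Int.toNat + (footprint x).sup (fun i => (-i).toNat) : ℕ)
    - (cursor x).natAbs

noncomputable def block (n : ℕ) : ℤ →₀ ZMod q :=
  indicator (Finset.Icc (-n : ℤ) n) fun _ _ => 1

theorem support_block [Nontrivial (ZMod q)] (n : ℕ) :
    (block n : ℤ →₀ ZMod q).support = Finset.Icc (-n : ℤ) n := by
  ext i
  simp [block, indicator_apply]

open Classical in
noncomputable def gens (q : ℕ) [NeZero q] : Finset (Lamplighter q) :=
  insert shiftGen (Finset.univ.image lampGen)

variable [NeZero q] {s : Lamplighter q}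

theorem shiftGen_mem_gens : shiftGen ∈ (gens q : Set (Lamplighter q)) := by
  simp [gens]

theorem lampGen_mem_gens (v : ZMod q) : lampGen v ∈ (gens q : Set (Lamplighter q)) := by
  simp [gens]

theorem closure_gens : Subgroup.closure (gens q : Set (Lamplighter q)) = ⊤ := by
  refine eq_top_iff.2 fun x _ => ?_
  have hshift := Subgroup.subset_closure (shiftGen_mem_gens (q := q))
  have hlamps : ∀ f : ℤ →₀ ZMod q, mk f 0 ∈ Subgroup.closure (gens q : Set (Lamplighter q)) := by
    intro f
    induction f using Finsupp.induction with
    | zero => exact Subgroup.one_mem _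
    | single_add i v f _ _ ih =>
      rw [mk_add, mk_single_eq_conj]
      have hlamp := Subgroup.subset_closure (lampGen_mem_gens v)
      have hpow := Subgroup.zpow_mem _ hshift i
      exact Subgroup.mul_mem _
        (Subgroup.mul_mem _ (Subgroup.mul_mem _ hpow hlamp) (Subgroup.inv_mem _ hpow)) ih
  rw [← mk_lamps_cursor x, mk_eq_mk_zero_mul, mk_zero_eq_shiftGen_zpow]
  exact Subgroup.mul_mem _ (hlamps _) (Subgroup.zpow_mem _ hshift _)

theorem mem_closure_gens (x : Lamplighter q) :
    x ∈ Subgroup.closure (gens q : Set (Lamplighter q)) := by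
  simp [closure_gens]

theorem wordLength_gens_mul_le (x y : Lamplighter q) :
    wordLength (gens q : Set (Lamplighter q)) (x * y) ≤
      wordLength (gens q : Set (Lamplighter q)) x + wordLength (gens q : Set (Lamplighter q)) y :=
  wordLength_mul_le (mem_closure_gens x) (mem_closure_gens y)

theorem exists_eq_mk_single_of_mem
    (hs : s ∈ (gens q : Set (Lamplighter q)) ∪ (gens q : Set (Lamplighter q))⁻¹) :
    ∃ v c, s = mk (single 0 v) c ∧ (c = 0 ∨ v = 0 ∧ c.natAbs = 1) := by
  simp only [gens, Finset.coe_insert, Finset.coe_image, Finset.coe_univ, Set.image_univ,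
    Set.mem_union, Set.mem_insert_iff, Set.mem_range, Set.mem_inv] at hs
  rcases hs with (rfl | ⟨v, rfl⟩) | (hs | ⟨v, hv⟩)
  · exact ⟨0, 1, by simp [shiftGen], by simp⟩
  · exact ⟨v, 0, rfl, by simp⟩
  · exact ⟨0, -1, by rw [← inv_inv s, hs, shiftGen, mk_inv]; simp, by simp⟩
  · exact ⟨-v, 0, by rw [← inv_inv s, ← hv, lampGen, mk_inv]; simp, by simp⟩

theorem footprint_mul_subset (x : Lamplighter q)
    (hs : s ∈ (gens q : Set (Lamplighter q)) ∪ (gens q : Set (Lamplighter q))⁻¹) :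
    footprint (x * s) ⊆ insert (cursor (x * s)) (footprint x) := by
  obtain ⟨v, c, rfl, -⟩ := exists_eq_mk_single_of_mem hs
  rw [mul_mk_single]
  exact Finset.insert_subset_insert _ (support_add_single_subset _ _ _)

theorem natAbs_cursor_le_one
    (hs : s ∈ (gens q : Set (Lamplighter q)) ∪ (gens q : Set (Lamplighter q))⁻¹) :
    (cursor s).natAbs ≤ 1 := by
  obtain ⟨v, c, rfl, hvc⟩ := exists_eq_mk_single_of_mem hs
  rcases hvc with rfl | ⟨-, hc⟩ <;> simp [*]

theorem card_support_lamps_mul_add_natAbs_le (x : Lamplighter q)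
    (hs : s ∈ (gens q : Set (Lamplighter q)) ∪ (gens q : Set (Lamplighter q))⁻¹) :
    (lamps (x * s)).support.card + (cursor s).natAbs ≤ (lamps x).support.card + 1 := by
  obtain ⟨v, c, rfl, hvc⟩ := exists_eq_mk_single_of_mem hs
  rw [mul_mk_single, lamps_mk, cursor_mk]
  rcases hvc with rfl | ⟨rfl, hc⟩
  · simpa using (Finset.card_le_card (support_add_single_subset _ _ _)).trans
      (Finset.card_insert_le _ _)
  · simp [hc]

theorem sup_footprint_mul_le (σ : ℤ → ℕ) (x : Lamplighter q)
    (hs : s ∈ (gens q : Set (Lamplighter q)) ∪ (gens q : Set (Lamplighter q))⁻¹) :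
    (footprint (x * s)).sup σ ≤ max (σ (cursor (x * s))) ((footprint x).sup σ) := by
  rw [← Finset.sup_insert]
  exact Finset.sup_mono (footprint_mul_subset x hs)

theorem natAbs_le_wordLength_of_mem_footprint {x : Lamplighter q} {i : ℤ} (hi : i ∈ footprint x) :
    i.natAbs ≤ wordLength (gens q : Set (Lamplighter q)) x := by
  refine (Finset.le_sup (f := Int.natAbs) hi).trans ?_
  have := le_wordLength_of_map_mul_le_add_one
    (fun x => (((footprint x).sup Int.natAbs : ℕ) : ℤ)) (by rfl) (fun x s hs => by
      have hsup := sup_footprint_mul_le Int.natAbs x hs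
      have hcur := le_sup_footprint_cursor Int.natAbs x
      have hstep := natAbs_cursor_le_one hs
      rw [cursor_mul] at hsup
      omega) (mem_closure_gens x)
  exact_mod_cast this

theorem potential_le_wordLength (x : Lamplighter q) :
    potential x ≤ wordLength (gens q : Set (Lamplighter q)) x := by
  refine le_wordLength_of_map_mul_le_add_one potential (by simp [potential, footprint, one_eq_mk])
    (fun x s hs => ?_) (mem_closure_gens x)
  have hR := sup_footprint_mul_le Int.toNat x hs
  have hL := sup_footprint_mul_le (fun i => (-i).toNat) x hs
  have hR₀ := le_sup_footprint_cursor Int.toNat x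
  have hL₀ := le_sup_footprint_cursor (fun i => (-i).toNat) x
  have hcard := card_support_lamps_mul_add_natAbs_le x hs
  have hc := natAbs_cursor_le_one hs
  rw [cursor_mul] at hR hL
  simp only [potential, cursor_mul]
  omega

theorem le_wordLength_mk_block [Nontrivial (ZMod q)] (n : ℕ) :
    6 * n + 1 ≤ wordLength (gens q : Set (Lamplighter q)) (mk (block n) 0) := by
  have hmem : ∀ i ∈ Finset.Icc (-n : ℤ) n, i ∈ footprint (mk (block n : ℤ →₀ ZMod q) 0) :=
    fun i hi => Finset.mem_insert_of_mem (by rwa [lamps_mk, support_block])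
  have hR := Finset.le_sup (f := Int.toNat) (hmem n (by simp))
  have hL := Finset.le_sup (f := fun i => (-i).toNat) (hmem (-n) (by simp))
  have hcard : (block n : ℤ →₀ ZMod q).support.card = 2 * n + 1 := by
    rw [support_block, Int.card_Icc]; omega
  have := potential_le_wordLength (mk (block n : ℤ →₀ ZMod q) 0)
  simp only [potential, lamps_mk, cursor_mk, hcard] at this hR hL
  omega

theorem wordLength_mk_le_of_support_subset_Icc_zero (m : ℕ) (f : ℤ →₀ ZMod q)
    (hf : ↑f.support ⊆ Set.Icc (0 : ℤ) m) :
    wordLength (gens q : Set (Lamplighter q)) (mk f m) ≤ 2 * m + 1 := by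
  induction m generalizing f with
  | zero =>
    have hf : f = single 0 (f 0) :=
      support_subset_singleton.1 fun i hi => by simpa [le_antisymm_iff, and_comm] using hf hi
    rw [hf]
    exact wordLength_le_one (lampGen_mem_gens _)
  | succ m ih =>
    set g := shift (-1) (f.erase 0)
    have hg : ↑g.support ⊆ Set.Icc (0 : ℤ) m := fun i hi => by
      have hi' := mem_support_iff.1 hi
      rw [shift_apply, sub_neg_eq_add] at hi'
      have hne : i + 1 ≠ 0 := fun h => hi' (by rw [h, erase_same])
      rw [erase_ne hne] at hi'
      have := hf (mem_support_iff.2 hi')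
      simp only [Set.mem_Icc] at this ⊢
      push_cast at this
      omega
    have hdecomp : mk f (m + 1 : ℕ) = lampGen (f 0) * (shiftGen * mk g m) := by
      simp only [lampGen, shiftGen, mk_mul_mk, g, shift_shift]
      congr 1
      · simp [single_add_erase]
      · push_cast; ring
    rw [hdecomp]
    have h₁ := wordLength_gens_mul_le (lampGen (f 0)) (shiftGen * mk g m)
    have h₂ := wordLength_gens_mul_le shiftGen (mk g m)
    have hlamp := wordLength_le_one (lampGen_mem_gens (f 0))
    have hshift := wordLength_le_one (shiftGen_mem_gens (q := q))
    have := ih g hg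
    omega

theorem wordLength_mk_le_of_nonneg (a k : ℤ) (m : ℕ) (f : ℤ →₀ ZMod q)
    (hf : ↑f.support ⊆ Set.Icc a (a + m)) (ha : a ≤ 0) (hk : 0 ≤ k) (hkm : k ≤ a + m) :
    wordLength (gens q : Set (Lamplighter q)) (mk f k) ≤ 3 * m + 1 := by
  have hdecomp : mk f k = shiftGen ^ a * mk (shift (-a) f) m * shiftGen ^ (k - a - m) := by
    rw [← mk_zero_eq_shiftGen_zpow, ← mk_zero_eq_shiftGen_zpow, mk_mul_mk, mk_mul_mk,
      shift_shift]
    congr 1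
    · simp
    · ring
  have hsweep := wordLength_mk_le_of_support_subset_Icc_zero m (shift (-a) f) fun i hi => by
    have := hf (mem_support_iff.2 (by simpa [shift_apply] using mem_support_iff.1 hi))
    simp only [Set.mem_Icc] at this ⊢
    omega
  have hleft := wordLength_zpow_le (shiftGen_mem_gens (q := q)) a
  have hright := wordLength_zpow_le (shiftGen_mem_gens (q := q)) (k - a - m)
  have h₁ := wordLength_gens_mul_le (shiftGen ^ a * mk (shift (-a) f) m) (shiftGen ^ (k - a - m))
  have h₂ := wordLength_gens_mul_le (shiftGen ^ a) (mk (shift (-a) f) m)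
  rw [hdecomp]
  omega

theorem wordLength_mk_le (a k : ℤ) (m : ℕ) (f : ℤ →₀ ZMod q)
    (hf : ↑f.support ⊆ Set.Icc a (a + m)) (ha : a ≤ 0) (ham : 0 ≤ a + m) (hak : a ≤ k)
    (hkm : k ≤ a + m) : wordLength (gens q : Set (Lamplighter q)) (mk f k) ≤ 3 * m + 1 := by
  rcases le_or_gt 0 k with hk | hk
  · exact wordLength_mk_le_of_nonneg a k m f hf ha hk hkm
  -- the inverse `(-shift (-k) f, -k)` has its cursor on the other side of the origin
  have hinv := wordLength_mk_le_of_nonneg (a - k) (-k) m (-shift (-k) f)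
    (fun i hi => by
      have := hf (mem_support_iff.2 (by simpa [shift_apply] using mem_support_iff.1 hi))
      simp only [Set.mem_Icc] at this ⊢
      omega) (by omega) (by omega) (by omega)
  rw [← mk_inv] at hinv
  calc wordLength _ (mk f k) = wordLength _ (mk f k)⁻¹⁻¹ := by rw [inv_inv]
    _ ≤ wordLength _ (mk f k)⁻¹ := wordLength_inv_le (mem_closure_gens _)
    _ ≤ 3 * m + 1 := hinv

theorem wordLength_le_of_forall_mem_footprint (n : ℕ) (x : Lamplighter q)
    (hx : ∀ i ∈ footprint x, i.natAbs ≤ n) :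
    wordLength (gens q : Set (Lamplighter q)) x ≤ 6 * n + 1 := by
  have hcur := hx _ (Finset.mem_insert_self _ _)
  have := wordLength_mk_le (-n) (cursor x) (2 * n) (lamps x) (fun i hi => by
      have := hx i (Finset.mem_insert_of_mem hi)
      simp only [Set.mem_Icc]
      omega) (by omega) (by omega) (by omega) (by omega)
  rw [mk_lamps_cursor] at this
  omega

end Lamplighter

open Lamplighter

/-- lamplighter groups have deep pockets with respect to some
finite generating set. -/
theorem stmt10 (q : ℕ) (hq : 2 ≤ q) :
    ∃ S : Finset (Lamplighter q),
      Subgroup.closure (S : Set (Lamplighter q)) = ⊤ ∧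
      HasDeepPockets (S : Set (Lamplighter q)) := by
  have : NeZero q := ⟨by omega⟩
  have : Fact (1 < q) := ⟨hq⟩
  refine ⟨gens q, closure_gens, fun d => ⟨mk (block d) 0, fun h hlt => ?_⟩⟩
  by_contra! hd
  set w := (mk (block d) 0)⁻¹ * h
  have hw : ∀ i ∈ footprint w, i.natAbs < d := fun i hi =>
    (natAbs_le_wordLength_of_mem_footprint hi).trans_lt hd
  have hh : h = mk (block d) 0 * w := by simp [w]
  have hupper := wordLength_le_of_forall_mem_footprint d h fun i hi => by
    rcases Finset.mem_union.1 (footprint_mk_zero_mul _ _ (hh ▸ hi)) with hi | hi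
    · rw [support_block, Finset.mem_Icc] at hi
      omega
    · exact (hw i hi).le
  have hlower := le_wordLength_mk_block (q := q) d
  omega
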